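/- For all nonnegative integers m and n with n > m + 1, C_{1+2m}(n) := Σ_{k=1}^{n} (−1)^(k−1) · [2n, n−k] · k^(1+2m) satisfies C_{1+2m}(n) = (1/8) · Σ_{ℓ=0}^{m} (−1)^ℓ · ⟨2n − 1/2⟩_{2ℓ} · { ((2n−2ℓ−1)/(n−ℓ−1)) · [2n−2ℓ, n−ℓ] + (−1)^(n+ℓ) · ((1+2n)(1+2ℓ)/(n−ℓ−1)) · [2n−ℓ, ℓ]^(−1) } · σ_{m,ℓ}(n − 1/2). -/

import Mathlib

/-!
Write `k ^ (2m+1) = k (k²)^m` and expand `(k²)^m` in Newton form at the nodes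
`(n - 1/2 - j)²`, `j = 0, 1, …`; the Newton coefficients are complete homogeneous sums of
the nodes, i.e. `σ_{m,ℓ}(n - 1/2)`. Extend `k ↦ [2N, N-k]` to all `k` as
`b_N(k) = [2N, N] ⟨N - 1/2⟩_k / (N + 1/2)_k`. Multiplying `b_N(k)` by the node
`k² - (N - 1/2)²` gives a constant multiple of `b_{N-1}(k)`, so the `ℓ`-th Newton term
reduces to the alternating first moment of `b_{n-ℓ}`. That moment telescopes: with
`Q(x) = (2x - 1)(2x + 2N - 1) / (8(N - 1))` one has `b_N(k) k = b_N(k+1) Q(k+1) + b_N(k) Q(k)`,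
and the boundary terms at `k = 1` and `k = n + 1` are the two summands in the braces.
-/

open Finset

/-- Falling factorial `⟨x⟩_n = x(x-1)⋯(x-n+1)`. -/
noncomputable def ffact (x : ℝ) : ℕ → ℝ
  | 0 => 1
  | n + 1 => ffact x n * (x - n)

/-- Rising factorial `(x)_n = x(x+1)⋯(x+n-1)`. -/
noncomputable def rfact (x : ℝ) : ℕ → ℝ
  | 0 => 1
  | n + 1 => rfact x n * (x + n)

/-- The bracket coefficient `[n, k] = (1/2)_n / ((1/2)_k (1/2)_{n-k})`. -/
noncomputable def brkt (n k : ℕ) : ℝ :=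
  rfact (1 / 2) n / (rfact (1 / 2) k * rfact (1 / 2) (n - k))

/-- `σ_{m,ℓ}(y)`: the complete homogeneous symmetric polynomial of degree `m - ℓ`
evaluated at `(y-0)^2, (y-1)^2, …, (y-ℓ)^2`, i.e. the sum over weakly increasing
sequences `0 ≤ k_1 ≤ ⋯ ≤ k_{m-ℓ} ≤ ℓ` of `∏ i, (y - k_i)^2`. -/
noncomputable def csigma (m ℓ : ℕ) (y : ℝ) : ℝ :=
  ∑ k ∈ Finset.univ.filter (fun k : Fin (m - ℓ) → Fin (ℓ + 1) => Monotone k),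
    ∏ i, (y - (k i : ℝ)) ^ 2

lemma rfact_succ (x : ℝ) (n : ℕ) : rfact x (n + 1) = rfact x n * (x + n) := rfl

lemma ffact_succ (x : ℝ) (n : ℕ) : ffact x (n + 1) = ffact x n * (x - n) := rfl

section Pochhammer

open Polynomial

lemma rfact_eq_eval_ascPochhammer (x : ℝ) (n : ℕ) : rfact x n = (ascPochhammer ℝ n).eval x := by
  induction n with
  | zero => simp [rfact]
  | succ n ih => rw [ascPochhammer_succ_eval, ← ih]; rfl

lemma ffact_eq_eval_descPochhammer (x : ℝ) (n : ℕ) : ffact x n = (descPochhammer ℝ n).eval x := by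
  induction n with
  | zero => simp [ffact]
  | succ n ih => rw [descPochhammer_succ_eval, ← ih]; rfl

lemma rfact_add (x : ℝ) (a b : ℕ) : rfact x (a + b) = rfact x a * rfact (x + a) b := by
  simp only [rfact_eq_eval_ascPochhammer, ← ascPochhammer_mul, eval_mul, eval_comp, eval_add,
    eval_X, eval_natCast]

lemma ffact_add (x : ℝ) (a b : ℕ) : ffact x (a + b) = ffact x a * ffact (x - a) b := by
  simp only [ffact_eq_eval_descPochhammer, ← descPochhammer_mul, eval_mul, eval_comp, eval_sub,
    eval_X, eval_natCast]

lemma ffact_eq_rfact (x : ℝ) (n : ℕ) : ffact x n = rfact (x - n + 1) n := by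
  rw [ffact_eq_eval_descPochhammer, rfact_eq_eval_ascPochhammer,
    descPochhammer_eval_eq_ascPochhammer]

lemma ffact_neg (x : ℝ) (n : ℕ) : ffact (-x) n = (-1) ^ n * rfact x n := by
  rw [ffact_eq_eval_descPochhammer, rfact_eq_eval_ascPochhammer, ← neg_neg x,
    ascPochhammer_eval_neg_eq_descPochhammer, neg_neg, ← mul_assoc, ← pow_add, ← two_mul,
    pow_mul]
  simp

end Pochhammer

lemma rfact_succ' (x : ℝ) (n : ℕ) : rfact x (n + 1) = x * rfact (x + 1) n := by
  rw [add_comm n, rfact_add, Nat.cast_one]; simp [rfact]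

lemma ffact_succ' (x : ℝ) (n : ℕ) : ffact x (n + 1) = x * ffact (x - 1) n := by
  rw [add_comm n, ffact_add, Nat.cast_one]; simp [ffact]

lemma rfact_pos {x : ℝ} (hx : 0 < x) (n : ℕ) : 0 < rfact x n := by
  induction n with
  | zero => simp [rfact]
  | succ n ih => exact mul_pos ih (by positivity)

section CompleteHomog

variable {R : Type*} [CommRing R]

/-- `completeHomog a d L = h_d(a 0, …, a (L - 1))`: note that `L` counts the nodes. -/
def completeHomog (a : ℕ → R) (d L : ℕ) : R :=
  ∑ k ∈ univ.filter (fun k : Fin d → Fin L => Monotone k), ∏ i, a (k i)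

lemma completeHomog_zero_left (a : ℕ → R) (L : ℕ) : completeHomog a 0 L = 1 := by
  simp [completeHomog, Monotone]

lemma completeHomog_succ_zero (a : ℕ → R) (d : ℕ) : completeHomog a (d + 1) 0 = 0 := by
  simp [completeHomog]

lemma monotone_snoc_last {d L : ℕ} {g : Fin d → Fin (L + 1)} (hg : Monotone g) :
    Monotone (Fin.snoc g (Fin.last L) : Fin (d + 1) → Fin (L + 1)) := by
  intro i j hij
  induction j using Fin.lastCases with
  | last => rw [Fin.snoc_last]; exact Fin.le_last _
  | cast j =>
    induction i using Fin.lastCases with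
    | last => exact absurd hij (not_le.2 (Fin.castSucc_lt_last j))
    | cast i =>
      simp only [Fin.snoc_castSucc]
      exact hg (Fin.castSucc_le_castSucc_iff.mp hij)

lemma completeHomog_eq_sum_last_ne (a : ℕ → R) (d L : ℕ) :
    completeHomog a (d + 1) L =
      ∑ f ∈ (univ.filter fun f : Fin (d + 1) → Fin (L + 1) => Monotone f).filter
        (fun f => ¬f (Fin.last d) = Fin.last L), ∏ i, a (f i) := by
  refine sum_nbij (fun g => Fin.castSucc ∘ g) ?_ ?_ ?_ fun _ _ => rfl
  · intro g hg
    simp only [mem_filter, mem_univ, true_and] at hg ⊢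
    exact ⟨Fin.strictMono_castSucc.monotone.comp hg, (Fin.castSucc_lt_last _).ne⟩
  · exact (Fin.castSucc_injective L).comp_left.injOn
  · intro f hf
    simp only [mem_coe, mem_filter, mem_univ, true_and] at hf
    have hlt : ∀ i, f i ≠ Fin.last L := fun i =>
      ((hf.1 (Fin.le_last i)).trans_lt (Fin.lt_last_iff_ne_last.2 hf.2)).ne
    refine ⟨fun i => (f i).castPred (hlt i), ?_, funext fun i => by simp⟩
    simp only [mem_coe, mem_filter, mem_univ, true_and]
    intro i j hij
    simpa [Fin.castPred_le_castPred_iff] using hf.1 hij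

lemma mul_completeHomog_eq_sum_last_eq (a : ℕ → R) (d L : ℕ) :
    a L * completeHomog a d (L + 1) =
      ∑ f ∈ (univ.filter fun f : Fin (d + 1) → Fin (L + 1) => Monotone f).filter
        (fun f => f (Fin.last d) = Fin.last L), ∏ i, a (f i) := by
  rw [completeHomog, mul_sum]
  refine sum_nbij (fun g => Fin.snoc g (Fin.last L)) ?_ ?_ ?_ ?_
  · intro g hg
    simp only [mem_filter, mem_univ, true_and] at hg ⊢
    exact ⟨monotone_snoc_last hg, Fin.snoc_last _ _⟩
  · intro g _ g' _ h
    simpa using congrArg Fin.init h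
  · intro f hf
    simp only [mem_coe, mem_filter, mem_univ, true_and] at hf
    refine ⟨Fin.init f, ?_, by simp only; rw [← hf.2, Fin.snoc_init_self]⟩
    simp only [mem_coe, mem_filter, mem_univ, true_and]
    exact hf.1.comp Fin.strictMono_castSucc.monotone
  · intro g _
    simp [Fin.prod_univ_castSucc, mul_comm]

lemma completeHomog_succ_succ (a : ℕ → R) (d L : ℕ) :
    completeHomog a (d + 1) (L + 1) =
      completeHomog a (d + 1) L + a L * completeHomog a d (L + 1) := by
  rw [completeHomog_eq_sum_last_ne a d L, mul_completeHomog_eq_sum_last_eq,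
    sum_filter_not_add_sum_filter, completeHomog]

lemma pow_eq_sum_completeHomog_mul_prod_sub (a : ℕ → R) (x : R) (m : ℕ) :
    x ^ m = ∑ ℓ ∈ range (m + 1), completeHomog a (m - ℓ) (ℓ + 1) * ∏ j ∈ range ℓ, (x - a j) := by
  induction m with
  | zero => simp [completeHomog_zero_left]
  | succ m ih =>
    set P : ℕ → R := fun ℓ => ∏ j ∈ range ℓ, (x - a j)
    have hxP : ∀ ℓ, x * P ℓ = P (ℓ + 1) + a ℓ * P ℓ := fun ℓ => by
      simp only [P, prod_range_succ]; ring
    have hx : x ^ (m + 1) = ∑ ℓ ∈ range (m + 1), completeHomog a (m - ℓ) (ℓ + 1) * P (ℓ + 1) +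
        ∑ ℓ ∈ range (m + 1), a ℓ * completeHomog a (m - ℓ) (ℓ + 1) * P ℓ := by
      rw [pow_succ', ih, mul_sum, ← sum_add_distrib]
      exact sum_congr rfl fun ℓ _ => by rw [mul_left_comm, hxP]; ring
    have hshift : ∑ ℓ ∈ range (m + 1), completeHomog a (m - ℓ) (ℓ + 1) * P (ℓ + 1) =
        ∑ ℓ ∈ range (m + 1), completeHomog a (m + 1 - ℓ) ℓ * P ℓ + P (m + 1) := by
      rw [sum_range_succ (fun ℓ => completeHomog a (m - ℓ) (ℓ + 1) * P (ℓ + 1)),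
        sum_range_succ' (fun ℓ => completeHomog a (m + 1 - ℓ) ℓ * P ℓ)]
      simp [completeHomog_succ_zero, completeHomog_zero_left]
    have hrec : ∑ ℓ ∈ range (m + 1), completeHomog a (m + 1 - ℓ) (ℓ + 1) * P ℓ =
        ∑ ℓ ∈ range (m + 1), completeHomog a (m + 1 - ℓ) ℓ * P ℓ +
          ∑ ℓ ∈ range (m + 1), a ℓ * completeHomog a (m - ℓ) (ℓ + 1) * P ℓ := by
      rw [← sum_add_distrib]
      refine sum_congr rfl fun ℓ hℓ => ?_
      rw [Nat.sub_add_comm (Nat.le_of_lt_succ (mem_range.1 hℓ)), completeHomog_succ_succ]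
      ring
    rw [sum_range_succ, Nat.sub_self, completeHomog_zero_left, hx, hshift, hrec]
    ring

end CompleteHomog

lemma csigma_eq_completeHomog (m ℓ : ℕ) (y : ℝ) :
    csigma m ℓ y = completeHomog (fun j => (y - j) ^ 2) (m - ℓ) (ℓ + 1) := rfl

lemma sum_Icc_neg_one_pow_mul_of_add_succ {R : Type*} [CommRing R] (f g : ℕ → R)
    (h : ∀ k, f (k + 1) + f k = g k) (M : ℕ) :
    ∑ k ∈ Icc 1 M, (-1) ^ (k - 1) * g k = (-1) ^ (M + 1) * f (M + 1) + f 1 := by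
  induction M with
  | zero => simp
  | succ M ih =>
    rw [sum_Icc_succ_top (by omega), ih, Nat.add_sub_cancel, ← h]
    ring

/-- `[2N, N - k]` for `k ≤ N` (see `brktExt_eq_brkt`), extended to all `k`: lowering `N` by
multiplying with a node leaves the range `k ≤ N`. -/
noncomputable def brktExt (N k : ℕ) : ℝ :=
  brkt (2 * N) N * (ffact (N - 1 / 2) k / rfact (N + 1 / 2) k)

lemma brkt_two_mul_self (N : ℕ) : brkt (2 * N) N = rfact (1 / 2) (2 * N) / rfact (1 / 2) N ^ 2 := by
  rw [brkt, two_mul, Nat.add_sub_cancel, sq]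

lemma brktExt_eq_brkt {N k : ℕ} (hk : k ≤ N) : brktExt N k = brkt (2 * N) (N - k) := by
  have hN : rfact (1 / 2) N = rfact (1 / 2) (N - k) * ffact (N - 1 / 2) k := by
    rw [ffact_eq_rfact, show (N : ℝ) - 1 / 2 - k + 1 = 1 / 2 + (N - k : ℕ) by
      rw [Nat.cast_sub hk]; ring, ← rfact_add, Nat.sub_add_cancel hk]
  have hNk : rfact (1 / 2) (N + k) = rfact (1 / 2) N * rfact (N + 1 / 2) k := by
    rw [rfact_add, add_comm (1 / 2 : ℝ)]
  have := rfact_pos (x := 1 / 2) (by norm_num) (N - k)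
  have := rfact_pos (x := 1 / 2) (by norm_num) N
  have := rfact_pos (x := N + 1 / 2) (by positivity) k
  rw [brktExt, brkt_two_mul_self, brkt, show 2 * N - (N - k) = N + k by omega, hNk, hN]
  field_simp

lemma brktExt_succ_mul (N k : ℕ) :
    brktExt N (k + 1) * (N + k + 1 / 2) = brktExt N k * (N - k - 1 / 2) := by
  have := rfact_pos (x := N + 1 / 2) (by positivity) k
  have : (0 : ℝ) < N + 1 / 2 + k := by positivity
  rw [brktExt, brktExt, ffact_succ, rfact_succ]
  field_simp
  ring

lemma brktExt_one (N : ℕ) : brktExt N 1 = (N - 1 / 2) / (N + 1 / 2) * brkt (2 * N) N := by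
  simp only [brktExt, ffact, rfact]
  ring

lemma brktExt_add_succ (N ℓ : ℕ) :
    brktExt N (N + ℓ + 1) =
      (-1) ^ (ℓ + 1) * ((ℓ + 1 / 2) / (2 * N + ℓ + 1 / 2)) * (brkt (2 * N + ℓ) ℓ)⁻¹ := by
  have hf : ffact (N - 1 / 2) (N + (ℓ + 1)) =
      rfact (1 / 2) N * ((-1) ^ (ℓ + 1) * (rfact (1 / 2) ℓ * (1 / 2 + ℓ))) := by
    rw [ffact_add, ffact_eq_rfact, show (N : ℝ) - 1 / 2 - N = -(1 / 2) by ring, ffact_neg,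
      rfact_succ]
    congr 2; ring
  have hr : rfact (1 / 2) (2 * N + ℓ) * (1 / 2 + (2 * N + ℓ)) =
      rfact (1 / 2) N * rfact (N + 1 / 2) (N + (ℓ + 1)) := by
    rw [add_comm (N : ℝ), ← rfact_add, show N + (N + (ℓ + 1)) = 2 * N + ℓ + 1 by ring, rfact_succ]
    push_cast; ring
  have := rfact_pos (x := 1 / 2) (by norm_num) N
  have := rfact_pos (x := 1 / 2) (by norm_num) ℓ
  have := rfact_pos (x := 1 / 2) (by norm_num) (2 * N)
  have := rfact_pos (x := 1 / 2) (by norm_num) (2 * N + ℓ)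
  have := rfact_pos (x := N + 1 / 2) (by positivity) (N + (ℓ + 1))
  have hR : rfact (N + 1 / 2) (N + (ℓ + 1)) =
      rfact (1 / 2) (2 * N + ℓ) * (1 / 2 + (2 * N + ℓ)) / rfact (1 / 2) N := by
    rw [eq_div_iff (by positivity), hr, mul_comm]
  rw [brktExt, brkt_two_mul_self, brkt, Nat.add_sub_cancel, add_assoc N, hf, hR]
  field_simp
  ring

lemma brktExt_succ_mul_sub_sq (N k : ℕ) :
    brktExt (N + 1) k * ((k : ℝ) ^ 2 - (N + 1 / 2) ^ 2) =
      -((2 * N + 3 / 2) * (2 * N + 1 / 2)) * brktExt N k := by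
  have hb : brkt (2 * (N + 1)) (N + 1) * (N + 1 / 2) ^ 2 =
      (2 * N + 1 / 2) * (2 * N + 3 / 2) * brkt (2 * N) N := by
    have := rfact_pos (x := 1 / 2) (by norm_num) N
    rw [brkt_two_mul_self, brkt_two_mul_self, show 2 * (N + 1) = 2 * N + 1 + 1 by ring,
      rfact_succ, rfact_succ, rfact_succ]
    push_cast
    field_simp
    ring
  have hf : ffact (N + 1 / 2) k * (N + 1 / 2 - k) = (N + 1 / 2) * ffact (N - 1 / 2) k := by
    rw [← ffact_succ, ffact_succ']; ring_nf
  have hr : rfact (N + 1 / 2) k * (N + 1 / 2 + k) = (N + 1 / 2) * rfact (N + 3 / 2) k := by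
    rw [← rfact_succ, rfact_succ']; ring_nf
  have := rfact_pos (x := N + 1 / 2) (by positivity) k
  have := rfact_pos (x := N + 3 / 2) (by positivity) k
  simp only [brktExt]
  push_cast
  rw [show (N : ℝ) + 1 - 1 / 2 = N + 1 / 2 by ring, show (N : ℝ) + 1 + 1 / 2 = N + 3 / 2 by ring]
  -- opaque atoms keep `field_simp` from normalizing the arguments of `rfact` and `ffact`
  generalize rfact (N + 1 / 2) k = R₁ at *
  generalize rfact (N + 3 / 2) k = R₂ at *
  generalize ffact (N + 1 / 2) k = F₁ at *
  generalize ffact (N - 1 / 2) k = F₂ at *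
  field_simp
  linear_combination (-4 * brkt (2 * (N + 1)) (N + 1) * R₁ * (N + 1 / 2 + k)) * hf +
    (-4 * brkt (2 * (N + 1)) (N + 1) * (N + 1 / 2) * F₂) * hr + (-4 * F₂ * R₂) * hb

lemma brktExt_add_mul_prod (N ℓ k : ℕ) :
    brktExt (N + ℓ) k * ∏ j ∈ range ℓ, ((k : ℝ) ^ 2 - ((N + ℓ : ℕ) - 1 / 2 - j) ^ 2) =
      (-1) ^ ℓ * ffact (2 * (N + ℓ : ℕ) - 1 / 2) (2 * ℓ) * brktExt N k := by
  induction ℓ generalizing N with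
  | zero => simp [ffact]
  | succ ℓ ih =>
    have hff : ffact (2 * (N + 1 + ℓ : ℕ) - 1 / 2) (2 * (ℓ + 1)) =
        ffact (2 * (N + 1 + ℓ : ℕ) - 1 / 2) (2 * ℓ) * ((2 * N + 3 / 2) * (2 * N + 1 / 2)) := by
      rw [show 2 * (ℓ + 1) = 2 * ℓ + 1 + 1 by ring, ffact_succ, ffact_succ]
      push_cast; ring
    rw [prod_range_succ, show N + (ℓ + 1) = N + 1 + ℓ by ring, ← mul_assoc, ih, hff]
    push_cast
    linear_combination (-1) ^ ℓ * ffact (2 * (N + 1 + ℓ : ℝ) - 1 / 2) (2 * ℓ) *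
      brktExt_succ_mul_sub_sq N k

noncomputable def telescopingQuad (N : ℕ) (x : ℝ) : ℝ :=
  (2 * x - 1) * (2 * x + 2 * N - 1) / (8 * (N - 1))

lemma telescopingQuad_rec {N : ℕ} (hN : N ≠ 1) (x : ℝ) :
    (N - x - 1 / 2) * telescopingQuad N (x + 1) + (N + x + 1 / 2) * telescopingQuad N x =
      (N + x + 1 / 2) * x := by
  have : (N : ℝ) - 1 ≠ 0 := sub_ne_zero.2 (by exact_mod_cast hN)
  simp only [telescopingQuad]
  field_simp
  ring

lemma brktExt_mul_telescopingQuad_add {N : ℕ} (hN : N ≠ 1) (k : ℕ) :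
    brktExt N (k + 1) * telescopingQuad N (k + 1 : ℕ) + brktExt N k * telescopingQuad N k =
      brktExt N k * k := by
  refine mul_right_cancel₀ (by positivity : (N : ℝ) + k + 1 / 2 ≠ 0) ?_
  push_cast
  linear_combination telescopingQuad N (k + 1) * brktExt_succ_mul N k +
    brktExt N k * telescopingQuad_rec hN k

lemma sum_Icc_neg_one_pow_mul_brktExt_mul {N : ℕ} (hN : N ≠ 1) (ℓ : ℕ) :
    ∑ k ∈ Icc 1 (N + ℓ), (-1) ^ (k - 1) * (brktExt N k * k) =
      1 / 8 * ((2 * N - 1) / (N - 1) * brkt (2 * N) N +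
        (-1) ^ N * ((1 + 2 * (N + ℓ : ℕ)) * (1 + 2 * ℓ) / (N - 1)) *
          (brkt (2 * N + ℓ) ℓ)⁻¹) := by
  have hN' : (N : ℝ) - 1 ≠ 0 := sub_ne_zero.2 (by exact_mod_cast hN)
  have hsq : ((-1 : ℝ) ^ ℓ) ^ 2 = 1 := by rw [← pow_mul, mul_comm, pow_mul]; norm_num
  rw [sum_Icc_neg_one_pow_mul_of_add_succ (fun k => brktExt N k * telescopingQuad N k) _
    (brktExt_mul_telescopingQuad_add hN), brktExt_add_succ, Nat.cast_one, brktExt_one]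
  simp only [telescopingQuad]
  push_cast
  field_simp
  linear_combination (-1) ^ N * (2 * ℓ + 1) * (2 * N + 2 * ℓ + 1) * (4 * N + 2 * ℓ + 1) *
    (2 * N + 1) / brkt (2 * N + ℓ) ℓ * hsq

lemma sum_Icc_neg_one_pow_mul_brktExt_mul_prod {n ℓ : ℕ} (hℓ : ℓ + 2 ≤ n) :
    ∑ k ∈ Icc 1 n, (-1) ^ (k - 1) * brktExt n k * k *
        ∏ j ∈ range ℓ, ((k : ℝ) ^ 2 - (n - 1 / 2 - j) ^ 2) =
      1 / 8 * ((-1) ^ ℓ * ffact (2 * (n : ℝ) - 1 / 2) (2 * ℓ) *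
        ((2 * (n : ℝ) - 2 * ℓ - 1) / (n - ℓ - 1) * brkt (2 * n - 2 * ℓ) (n - ℓ) +
          (-1) ^ (n + ℓ) * ((1 + 2 * (n : ℝ)) * (1 + 2 * ℓ) / (n - ℓ - 1)) *
            (brkt (2 * n - ℓ) ℓ)⁻¹)) := by
  obtain ⟨N, rfl⟩ : ∃ N, n = N + ℓ := ⟨n - ℓ, by omega⟩
  have hsign : (-1 : ℝ) ^ (N + ℓ + ℓ) = (-1) ^ N := by
    rw [add_assoc, pow_add, ← two_mul, pow_mul]; norm_num
  calc
    _ = (-1) ^ ℓ * ffact (2 * (N + ℓ : ℕ) - 1 / 2) (2 * ℓ) *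
        ∑ k ∈ Icc 1 (N + ℓ), (-1) ^ (k - 1) * (brktExt N k * k) := by
      rw [mul_sum]
      exact sum_congr rfl fun k _ => by
        linear_combination ((-1) ^ (k - 1) * k) * brktExt_add_mul_prod N ℓ k
    _ = _ := by
      rw [sum_Icc_neg_one_pow_mul_brktExt_mul (by omega), show 2 * (N + ℓ) - 2 * ℓ = 2 * N by omega,
        Nat.add_sub_cancel, show 2 * (N + ℓ) - ℓ = 2 * N + ℓ by omega, hsign]
      push_cast
      ring

theorem C_odd_moment (m n : ℕ) (h : m + 1 < n) :
    ∑ k ∈ Finset.Icc 1 n,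
        (-1 : ℝ) ^ (k - 1) * brkt (2 * n) (n - k) * (k : ℝ) ^ (1 + 2 * m) =
      (1 / 8) *
        ∑ ℓ ∈ Finset.range (m + 1),
          (-1 : ℝ) ^ ℓ * ffact (2 * (n : ℝ) - 1 / 2) (2 * ℓ) *
            ((2 * (n : ℝ) - 2 * (ℓ : ℝ) - 1) / ((n : ℝ) - (ℓ : ℝ) - 1) *
                brkt (2 * n - 2 * ℓ) (n - ℓ) +
              (-1 : ℝ) ^ (n + ℓ) *
                ((1 + 2 * (n : ℝ)) * (1 + 2 * (ℓ : ℝ)) / ((n : ℝ) - (ℓ : ℝ) - 1)) *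
                (brkt (2 * n - ℓ) ℓ)⁻¹) *
            csigma m ℓ ((n : ℝ) - 1 / 2) := by
  calc
    _ = ∑ k ∈ Icc 1 n, ∑ ℓ ∈ range (m + 1), csigma m ℓ (n - 1 / 2) *
        ((-1) ^ (k - 1) * brktExt n k * k * ∏ j ∈ range ℓ, ((k : ℝ) ^ 2 - (n - 1 / 2 - j) ^ 2)) := by
      refine sum_congr rfl fun k hk => ?_
      rw [← brktExt_eq_brkt (mem_Icc.1 hk).2, pow_add, pow_one, pow_mul,
        pow_eq_sum_completeHomog_mul_prod_sub (fun j => ((n : ℝ) - 1 / 2 - j) ^ 2) ((k : ℝ) ^ 2) m,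
        mul_sum, mul_sum]
      exact sum_congr rfl fun ℓ _ => by rw [csigma_eq_completeHomog]; ring
    _ = ∑ ℓ ∈ range (m + 1), csigma m ℓ (n - 1 / 2) * ∑ k ∈ Icc 1 n,
        (-1) ^ (k - 1) * brktExt n k * k * ∏ j ∈ range ℓ, ((k : ℝ) ^ 2 - (n - 1 / 2 - j) ^ 2) := by
      rw [sum_comm]
      simp only [mul_sum]
    _ = _ := by
      rw [mul_sum]
      exact sum_congr rfl fun ℓ hℓ => by
        rw [sum_Icc_neg_one_pow_mul_brktExt_mul_prod (by have := mem_range.1 hℓ; omega)]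
        ring
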